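/- (Lemma 3.2) There exists δ > 0 such that for every center arc I with limsup_{n→+∞} |f^n(I)| < ∞, exactly one of the following holds: (1) lim_{n→+∞} |f^n(I)| = 0, or (2) there exists n₀ such that |f^n(I)| ≥ δ for all n ≥ n₀. -/
import Mathlib


open Filter Topology

/-- Iterates of a homeomorphism indexed by `ℤ`. -/
def fpow {M : Type*} [TopologicalSpace M] (f : M ≃ₜ M) (n : ℤ) : M → M := ⇑(f.toEquiv ^ n)

/-- Abstract setting of an expansive, dynamically coherent partially hyperbolic
diffeomorphism with one-dimensional center: the map `f`, an expansivity constant,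
the system of nontrivial compact center arcs with the lengths of their iterates,
subdivision, limits/compactness of families of center arcs, and the invariant
foliations. -/
structure PHSystem (M : Type*) [MetricSpace M] where
  /-- the partially hyperbolic diffeomorphism (as a homeomorphism) -/
  f : M ≃ₜ M
  /-- the expansivity constant `α` -/
  expConst : ℝ
  expConst_pos : 0 < expConst
  /-- `f` is expansive with constant `α` -/
  expansive : ∀ x y : M, (∀ n : ℤ, dist (fpow f n x) (fpow f n y) ≤ expConst) → x = y
  /-- abstract type of nontrivial compact center arcs -/
  Arc : Type
  /-- length of a center arc -/
  len : Arc → ℝ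
  len_pos : ∀ I, 0 < len I
  /-- the image `f^n(I)` of a center arc -/
  iter : ℤ → Arc → Arc
  iter_zero : ∀ I, iter 0 I = I
  iter_add : ∀ m n I, iter m (iter n I) = iter (m + n) I
  /-- `subarc I J` means `I ⊆ J` inside a center leaf -/
  subarc : Arc → Arc → Prop
  len_mono : ∀ {I J}, subarc I J → len I ≤ len J
  iter_subarc : ∀ (n : ℤ) {I J}, subarc I J → subarc (iter n I) (iter n J)
  /-- convergence of a sequence of center arcs to a center arc (Hausdorff sense
  within the center foliation) -/
  conv : (ℕ → Arc) → Arc → Prop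
  /-- length of each iterate is continuous under convergence of center arcs -/
  conv_len : ∀ {s J}, conv s J → ∀ n : ℤ,
    Tendsto (fun j => len (iter n (s j))) atTop (nhds (len (iter n J)))
  /-- compactness: sequences of center arcs with lengths bounded away from `0` and `∞`
  subconverge to a center arc -/
  accum : ∀ (s : ℕ → Arc) (c C : ℝ), 0 < c → (∀ j, c ≤ len (s j)) → (∀ j, len (s j) ≤ C) →
    ∃ (J : Arc) (φ : ℕ → ℕ), StrictMono φ ∧ conv (fun j => s (φ j)) J
  /-- arcs can be subdivided with additivity of length -/
  subdiv : ∀ (I : Arc) (L : ℝ), 0 < L → L < len I →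
    ∃ I₁ I₂, subarc I₁ I ∧ subarc I₂ I ∧ len I₁ = L ∧ len I₂ = len I - L
  /-- `memInt x I` : the point `x` lies in the interior of the center arc `I` -/
  memInt : M → Arc → Prop
  memInt_iter : ∀ {x I} (n : ℤ), memInt x I → memInt (fpow f n x) (iter n I)
  /-- every point lies in the interior of arbitrarily short center arcs -/
  exists_arc : ∀ (x : M) (ε : ℝ), 0 < ε → ∃ I, memInt x I ∧ len I < ε
  /-- two center arcs through a common interior point contain a common subarc
  through that point -/
  inter_arc : ∀ {x I J}, memInt x I → memInt x J → ∃ K, memInt x K ∧ subarc K I ∧ subarc K J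
  /-- consequence of expansiveness: no nontrivial center arc has all of its
  iterates of length at most `α` -/
  no_alpha_bounded : ∀ I : Arc, ¬ (∀ n : ℤ, len (iter n I) ≤ expConst)
  /-- center foliation -/
  Wc : M → Set M
  /-- center-stable foliation -/
  Wcs : M → Set M
  /-- center-unstable foliation -/
  Wcu : M → Set M
  /-- strong stable foliation -/
  Wss : M → Set M
  /-- strong unstable foliation -/
  Wuu : M → Set M
  /-- local strong unstable disc of a given radius -/
  Wuuloc : ℝ → M → Set M

namespace PHSystem

variable {M : Type*} [MetricSpace M]

/-- `𝒜⁺`: points with a center arc around them whose forward iterates have bounded length. -/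
def Aplus (S : PHSystem M) : Set M :=
  {x | ∃ I, S.memInt x I ∧ ∃ C : ℝ, ∀ n : ℕ, S.len (S.iter (n : ℤ) I) ≤ C}

/-- `𝒜⁻`: points with a center arc around them whose backward iterates have bounded length. -/
def Aminus (S : PHSystem M) : Set M :=
  {x | ∃ I, S.memInt x I ∧ ∃ C : ℝ, ∀ n : ℕ, S.len (S.iter (-(n : ℤ)) I) ≤ C}

/-- the stable set `𝒲^s(x)` -/
def Ws (S : PHSystem M) (x : M) : Set M :=
  {y | Tendsto (fun n : ℕ => dist (fpow S.f (n : ℤ) x) (fpow S.f (n : ℤ) y)) atTop (nhds 0)}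

/-- the unstable set `𝒲^u(x)` -/
def Wu (S : PHSystem M) (x : M) : Set M :=
  {y | Tendsto (fun n : ℕ => dist (fpow S.f (-(n : ℤ)) x) (fpow S.f (-(n : ℤ)) y)) atTop (nhds 0)}

/-- the repelling set `ℛ = {x ∈ 𝒜⁺ : 𝒲^c(x) ⊆ 𝒜⁺}` -/
def RSet (S : PHSystem M) : Set M := {x | x ∈ S.Aplus ∧ S.Wc x ⊆ S.Aplus}

/-- the attracting set `𝒜 = {x ∈ 𝒜⁻ : 𝒲^c(x) ⊆ 𝒜⁻}` -/
def ASet (S : PHSystem M) : Set M := {x | x ∈ S.Aminus ∧ S.Wc x ⊆ S.Aminus}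

end PHSystem

section Aux

variable {M : Type*} [MetricSpace M] (S : PHSystem M)

private lemma iter_cancel (s : ℤ) (B : S.Arc) : S.iter (-s) (S.iter s B) = B := by
  have h : -s + s = 0 := by ring
  rw [S.iter_add, h, S.iter_zero]

private lemma sub_len (t : ℤ) {A B : S.Arc} (h : S.subarc A B) :
    S.len (S.iter t A) ≤ S.len (S.iter t B) :=
  S.len_mono (S.iter_subarc t h)

private lemma engine_zero (s : ℕ → S.Arc) (c C : ℝ) (hc : 0 < c)
    (h1 : ∀ j, c ≤ S.len (s j)) (h2 : ∀ j, S.len (s j) ≤ C) (t : ℤ)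
    (h3 : Tendsto (fun j => S.len (S.iter t (s j))) atTop (nhds 0)) : False := by
  obtain ⟨J, φ, hφ, hconv⟩ := S.accum s c C hc h1 h2
  have h4 := S.conv_len hconv t
  have h5 : Tendsto (fun j => S.len (S.iter t (s (φ j)))) atTop (nhds 0) :=
    h3.comp hφ.tendsto_atTop
  exact (S.len_pos (S.iter t J)).ne' (tendsto_nhds_unique h4 h5)

private lemma engine_alpha (s : ℕ → S.Arc) (c C : ℝ) (hc : 0 < c)
    (h1 : ∀ j, c ≤ S.len (s j)) (h2 : ∀ j, S.len (s j) ≤ C)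
    (h3 : ∀ t : ℤ, ∀ᶠ j in atTop, S.len (S.iter t (s j)) ≤ S.expConst) : False := by
  obtain ⟨J, φ, hφ, hconv⟩ := S.accum s c C hc h1 h2
  refine S.no_alpha_bounded J (fun t => ?_)
  exact le_of_tendsto (S.conv_len hconv t) (hφ.tendsto_atTop.eventually (h3 t))

private lemma exists_mod (s : ℤ) :
    ∃ c : ℝ, 0 < c ∧ ∀ B : S.Arc, S.expConst ≤ S.len (S.iter s B) → c ≤ S.len B := by
  by_contra h
  push_neg at h
  choose Bf h1 h2 using fun j : ℕ => h (1 / ((j : ℝ) + 1)) (by positivity)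
  have key : ∀ j : ℕ, ∃ D : S.Arc,
      S.len D = S.expConst ∧ S.len (S.iter (-s) D) ≤ S.len (Bf j) := by
    intro j
    rcases eq_or_lt_of_le (h1 j) with he | hl
    · exact ⟨S.iter s (Bf j), he.symm, le_of_eq (by rw [iter_cancel])⟩
    · obtain ⟨I₁, I₂, hs₁, -, hl₁, -⟩ := S.subdiv (S.iter s (Bf j)) S.expConst S.expConst_pos hl
      refine ⟨I₁, hl₁, ?_⟩
      have h3 := sub_len S (-s) hs₁
      rwa [iter_cancel] at h3
  choose D hD1 hD2 using key
  refine engine_zero S D S.expConst S.expConst S.expConst_pos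
    (fun j => (hD1 j).ge) (fun j => (hD1 j).le) (-s) ?_
  refine tendsto_of_tendsto_of_tendsto_of_le_of_le tendsto_const_nhds
    tendsto_one_div_add_atTop_nhds_zero_nat (fun j => (S.len_pos _).le) (fun j => ?_)
  exact ((hD2 j).trans_lt (h2 j)).le

private lemma exists_mod_upto (W : ℕ) :
    ∃ c : ℝ, 0 < c ∧ ∀ B : S.Arc, ∀ s : ℤ, 1 ≤ s → s ≤ (W : ℤ) →
      S.expConst ≤ S.len (S.iter s B) → c ≤ S.len B := by
  induction W with
  | zero => exact ⟨1, one_pos, fun B s hs1 hs2 _ => absurd (hs1.trans hs2) (by norm_num)⟩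
  | succ W ih =>
    obtain ⟨c, hc, hspec⟩ := ih
    obtain ⟨c', hc', hspec'⟩ := exists_mod S ((W : ℤ) + 1)
    refine ⟨min c c', lt_min hc hc', fun B s hs1 hs2 hB => ?_⟩
    have hs2' : s ≤ (W : ℤ) + 1 := by push_cast at hs2; omega
    rcases eq_or_lt_of_le hs2' with he | hl
    · subst he
      exact le_trans (min_le_right _ _) (hspec' B hB)
    · exact le_trans (min_le_left _ _) (hspec B s hs1 (by omega) hB)

private lemma exists_low (n : ℤ) :
    ∃ d : ℝ, 0 < d ∧ ∀ P : S.Arc, S.len P = S.expConst → d ≤ S.len (S.iter n P) := by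
  by_contra h
  push_neg at h
  choose P h1 h2 using fun j : ℕ => h (1 / ((j : ℝ) + 1)) (by positivity)
  refine engine_zero S P S.expConst S.expConst S.expConst_pos
    (fun j => (h1 j).ge) (fun j => (h1 j).le) n ?_
  refine tendsto_of_tendsto_of_tendsto_of_le_of_le tendsto_const_nhds
    tendsto_one_div_add_atTop_nhds_zero_nat (fun j => (S.len_pos _).le) (fun j => (h2 j).le)

private lemma exists_low_upto (W : ℕ) :
    ∃ d : ℝ, 0 < d ∧ ∀ P : S.Arc, S.len P = S.expConst →
      ∀ n : ℤ, 0 ≤ n → n ≤ (W : ℤ) → d ≤ S.len (S.iter n P) := by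
  induction W with
  | zero =>
    obtain ⟨d, hd, hspec⟩ := exists_low S 0
    refine ⟨d, hd, fun P hP n hn1 hn2 => ?_⟩
    have : n = 0 := by omega
    subst this
    exact hspec P hP
  | succ W ih =>
    obtain ⟨d, hd, hspec⟩ := ih
    obtain ⟨d', hd', hspec'⟩ := exists_low S ((W : ℤ) + 1)
    refine ⟨min d d', lt_min hd hd', fun P hP n hn1 hn2 => ?_⟩
    have hn2' : n ≤ (W : ℤ) + 1 := by push_cast at hn2; omega
    rcases eq_or_lt_of_le hn2' with he | hl
    · subst he
      exact le_trans (min_le_right _ _) (hspec' P hP)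
    · exact le_trans (min_le_left _ _) (hspec P hP n hn1 (by omega))

private lemma exists_cross :
    ∃ W : ℕ, 1 ≤ W ∧ ∀ P : S.Arc, S.len P = S.expConst →
      (∀ s : ℤ, 1 ≤ s → s ≤ (W : ℤ) → S.len (S.iter (-s) P) ≤ S.expConst) →
      ∃ t : ℤ, 1 ≤ t ∧ t ≤ (W : ℤ) ∧ S.expConst < S.len (S.iter t P) := by
  by_contra h
  push_neg at h
  choose P hP1 hP2 hP3 using fun j : ℕ => h (j + 1) (by omega)
  refine engine_alpha S P S.expConst S.expConst S.expConst_pos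
    (fun j => (hP1 j).ge) (fun j => (hP1 j).le) ?_
  intro t
  rcases lt_trichotomy t 0 with ht | ht | ht
  · refine eventually_atTop.mpr ⟨t.natAbs, fun j hj => ?_⟩
    have h4 := hP2 j (-t) (by omega) (by push_cast; omega)
    rwa [neg_neg] at h4
  · subst ht
    exact Eventually.of_forall fun j => by rw [S.iter_zero]; exact (hP1 j).le
  · refine eventually_atTop.mpr ⟨t.natAbs, fun j hj => ?_⟩
    exact hP3 j t (by omega) (by push_cast; omega)

private lemma tendsto_of_evbdd (I : S.Arc) (C : ℝ)
    (hC : ∀ n : ℕ, S.len (S.iter (n : ℤ) I) ≤ C)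
    (m : ℕ) (hm : ∀ n : ℕ, m ≤ n → S.len (S.iter (n : ℤ) I) ≤ S.expConst) :
    Tendsto (fun n : ℕ => S.len (S.iter (n : ℤ) I)) atTop (nhds 0) := by
  by_contra hcon
  rw [Metric.tendsto_atTop] at hcon
  push_neg at hcon
  obtain ⟨ε, hε, hfr⟩ := hcon
  choose nf hnf1 hnf2 using hfr
  refine engine_alpha S (fun j => S.iter ((nf (max j m) : ℕ) : ℤ) I) ε C hε
    (fun j => ?_) (fun j => hC _) ?_
  · have h4 := hnf2 (max j m)
    rwa [Real.dist_eq, sub_zero, abs_of_pos (S.len_pos _)] at h4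
  · intro t
    refine eventually_atTop.mpr ⟨m + t.natAbs, fun j hj => ?_⟩
    have hjge : (m + t.natAbs : ℕ) ≤ nf (max j m) := le_trans (le_trans hj (le_max_left _ _)) (hnf1 _)
    have hjge' : (m : ℤ) + (t.natAbs : ℤ) ≤ (nf (max j m) : ℤ) := by exact_mod_cast hjge
    rw [S.iter_add]
    have hpos : 0 ≤ t + (nf (max j m) : ℤ) := by omega
    have h5 := hm (t + (nf (max j m) : ℤ)).toNat (by omega)
    rwa [Int.toNat_of_nonneg hpos] at h5

private lemma case_dense (I : S.Arc) (W : ℕ) (cW : ℝ)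
    (hcW : ∀ B : S.Arc, ∀ s : ℤ, 1 ≤ s → s ≤ (W : ℤ) →
      S.expConst ≤ S.len (S.iter s B) → cW ≤ S.len B)
    (hio : ∀ m : ℕ, ∃ n : ℕ, m ≤ n ∧ S.expConst < S.len (S.iter (n : ℤ) I))
    (hnb : ∀ b : ℤ, S.expConst < S.len (S.iter b I) →
      ∃ s : ℤ, 1 ≤ s ∧ s ≤ (W : ℤ) ∧ S.expConst < S.len (S.iter (b - s) I)) :
    ∀ n : ℤ, min cW S.expConst ≤ S.len (S.iter n I) := by
  intro n
  obtain ⟨b₀, hb₀ge, hb₀⟩ := hio n.toNat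
  have hstep : ∀ p : {c : ℤ // S.expConst < S.len (S.iter c I)},
      ∃ p' : {c : ℤ // S.expConst < S.len (S.iter c I)},
        p.1 - (W : ℤ) ≤ p'.1 ∧ p'.1 ≤ p.1 - 1 := by
    rintro ⟨c, hc⟩
    obtain ⟨s, h1, h2, h3⟩ := hnb c hc
    exact ⟨⟨c - s, h3⟩, by simp only []; omega, by simp only []; omega⟩
  choose next hn1 hn2 using hstep
  set ch : ℕ → {c : ℤ // S.expConst < S.len (S.iter c I)} :=
    fun i => next^[i] ⟨(b₀ : ℤ), hb₀⟩ with hch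
  have hsucc : ∀ i, ch (i + 1) = next (ch i) := fun i =>
    Function.iterate_succ_apply' next i _
  have hdec : ∀ i, (ch i).1 ≤ (b₀ : ℤ) - i := by
    intro i
    induction i with
    | zero => simp [hch]
    | succ i ih =>
      have h4 := hn2 (ch i)
      rw [← hsucc] at h4
      push_cast
      omega
  have hex : ∃ j, (ch j).1 < n := by
    refine ⟨((b₀ : ℤ) - n).toNat + 1, ?_⟩
    have h4 := hdec (((b₀ : ℤ) - n).toNat + 1)
    push_cast at h4
    omega
  have hfind := Nat.find_spec hex
  have hne : Nat.find hex ≠ 0 := by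
    intro h0
    rw [h0] at hfind
    have hc0 : (ch 0).1 = (b₀ : ℤ) := rfl
    have hgoal : n ≤ (b₀ : ℤ) := by
      have := Int.self_le_toNat n
      omega
    omega
  obtain ⟨i, hi⟩ : ∃ i, Nat.find hex = i + 1 := ⟨Nat.find hex - 1, by omega⟩
  have h1 : n ≤ (ch i).1 := not_lt.mp (Nat.find_min hex (by omega))
  have h2 : (ch (i + 1)).1 < n := hi ▸ hfind
  have h3 : (ch i).1 - (W : ℤ) ≤ (ch (i + 1)).1 := by
    rw [hsucc]; exact hn1 _
  rcases eq_or_lt_of_le h1 with he | hlt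
  · have h5 := (ch i).2
    rw [← he] at h5
    exact le_trans (min_le_right _ _) h5.le
  · refine le_trans (min_le_left _ _) (hcW (S.iter n I) ((ch i).1 - n) (by omega) (by omega) ?_)
    rw [S.iter_add]
    have he2 : (ch i).1 - n + n = (ch i).1 := by ring
    rw [he2]
    exact (ch i).2.le

private lemma case_sep (I : S.Arc) (W : ℕ) (δ₀ : ℝ)
    (hLOW : ∀ P : S.Arc, S.len P = S.expConst →
      ∀ n : ℤ, 0 ≤ n → n ≤ (W : ℤ) → δ₀ ≤ S.len (S.iter n P))
    (hCROSS : ∀ P : S.Arc, S.len P = S.expConst →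
      (∀ s : ℤ, 1 ≤ s → s ≤ (W : ℤ) → S.len (S.iter (-s) P) ≤ S.expConst) →
      ∃ t : ℤ, 1 ≤ t ∧ t ≤ (W : ℤ) ∧ S.expConst < S.len (S.iter t P))
    (b : ℤ) (hb : S.expConst < S.len (S.iter b I))
    (hsep : ∀ s : ℤ, 1 ≤ s → s ≤ (W : ℤ) → S.len (S.iter (b - s) I) ≤ S.expConst) :
    ∀ n : ℤ, b ≤ n → δ₀ ≤ S.len (S.iter n I) := by
  classical
  set Inv : S.Arc → ℤ → Prop := fun P τ =>
    S.len P = S.expConst ∧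
    (∀ s : ℤ, 1 ≤ s → s ≤ (W : ℤ) → S.len (S.iter (-s) P) ≤ S.expConst) ∧
    (∀ t : ℤ, S.len (S.iter t P) ≤ S.len (S.iter (t + τ) I)) with hInv
  have hinit : ∃ P, Inv P b := by
    obtain ⟨I₁, I₂, hs₁, -, hl₁, -⟩ := S.subdiv (S.iter b I) S.expConst S.expConst_pos hb
    refine ⟨I₁, hl₁, fun s hs1 hsW => ?_, fun t => ?_⟩
    · have h := sub_len S (-s) hs₁
      rw [S.iter_add] at h
      have he : -s + b = b - s := by ring
      rw [he] at h
      exact h.trans (hsep s hs1 hsW)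
    · have h := sub_len S t hs₁
      rwa [S.iter_add] at h
  have hstep : ∀ p : {q : S.Arc × ℤ // Inv q.1 q.2},
      ∃ p' : {q : S.Arc × ℤ // Inv q.1 q.2},
        p.1.2 + 1 ≤ p'.1.2 ∧ p'.1.2 ≤ p.1.2 + (W : ℤ) := by
    rintro ⟨⟨P, τ⟩, hP, hbwd, hlink⟩
    have hgood : ∃ t : ℤ, 1 ≤ t ∧ t ≤ (W : ℤ) ∧ S.expConst < S.len (S.iter t P) :=
      hCROSS P hP hbwd
    haveI : DecidablePred (fun z : ℤ =>
        1 ≤ z ∧ z ≤ (W : ℤ) ∧ S.expConst < S.len (S.iter z P)) := fun _ => Classical.dec _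
    obtain ⟨t₀, ht₀, htmin⟩ := Int.exists_least_of_bdd
      (P := fun z : ℤ => 1 ≤ z ∧ z ≤ (W : ℤ) ∧ S.expConst < S.len (S.iter z P))
      ⟨1, fun z hz => hz.1⟩ (by obtain ⟨t, h1, h2, h3⟩ := hgood; exact ⟨t, h1, h2, h3⟩)
    obtain ⟨ht1, htW, hgt⟩ := ht₀
    obtain ⟨Q, Q₂, hQs, -, hQl, -⟩ := S.subdiv (S.iter t₀ P) S.expConst S.expConst_pos hgt
    refine ⟨⟨(Q, τ + t₀), hQl, fun s hs1 hsW => ?_, fun t => ?_⟩,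
      by simp only []; omega, by simp only []; omega⟩
    · have h := sub_len S (-s) hQs
      rw [S.iter_add] at h
      rcases lt_trichotomy (-s + t₀) 0 with hr | hr | hr
      · have hb2 := hbwd (-(-s + t₀)) (by omega) (by omega)
        rw [neg_neg] at hb2
        exact h.trans hb2
      · rw [hr, S.iter_zero] at h
        exact h.trans hP.le
      · have hnot : ¬ S.expConst < S.len (S.iter (-s + t₀) P) := by
          intro hcon
          have := htmin (-s + t₀) ⟨by omega, by omega, hcon⟩
          omega
        exact h.trans (not_lt.mp hnot)
    · have h := sub_len S t hQs
      rw [S.iter_add] at h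
      have h2 := hlink (t + t₀)
      have he : t + t₀ + τ = t + (τ + t₀) := by ring
      rw [he] at h2
      exact h.trans h2
  choose next hn1 hn2 using hstep
  obtain ⟨P₀, hP₀⟩ := hinit
  set ch : ℕ → {q : S.Arc × ℤ // Inv q.1 q.2} :=
    fun i => next^[i] ⟨(P₀, b), hP₀⟩ with hch
  have hsucc : ∀ i, ch (i + 1) = next (ch i) := fun i =>
    Function.iterate_succ_apply' next i _
  have hτ1 : ∀ i, (ch i).1.2 + 1 ≤ (ch (i + 1)).1.2 := by
    intro i; rw [hsucc]; exact hn1 _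
  have hτW : ∀ i, (ch (i + 1)).1.2 ≤ (ch i).1.2 + (W : ℤ) := by
    intro i; rw [hsucc]; exact hn2 _
  have hτ0 : (ch 0).1.2 = b := rfl
  have hτlb : ∀ i, b + i ≤ (ch i).1.2 := by
    intro i
    induction i with
    | zero => simp [hτ0]
    | succ i ih =>
      have := hτ1 i
      push_cast
      omega
  intro n hn
  have hex : ∃ j, n < (ch j).1.2 := by
    refine ⟨(n - b).toNat + 1, ?_⟩
    have h4 := hτlb ((n - b).toNat + 1)
    push_cast at h4
    omega
  have hfind := Nat.find_spec hex
  have hne : Nat.find hex ≠ 0 := by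
    intro h0
    rw [h0] at hfind
    omega
  obtain ⟨i, hi⟩ : ∃ i, Nat.find hex = i + 1 := ⟨Nat.find hex - 1, by omega⟩
  have h1 : (ch i).1.2 ≤ n := not_lt.mp (Nat.find_min hex (by omega))
  have h2 : n < (ch (i + 1)).1.2 := hi ▸ hfind
  have h3 := hτW i
  obtain ⟨hlen, hbwd, hlink⟩ := (ch i).2
  have h4 := hLOW (ch i).1.1 hlen (n - (ch i).1.2) (by omega) (by omega)
  have h5 := hlink (n - (ch i).1.2)
  have he : n - (ch i).1.2 + (ch i).1.2 = n := by ring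
  rw [he] at h5
  exact h4.trans h5

end Aux

/-- Lemma 3.2: there is a uniform `δ > 0` such that for every center arc whose
forward lengths stay bounded, exactly one of the following holds: the lengths tend
to `0`, or they are eventually at least `δ`. -/
theorem lemma_3_2 {M : Type*} [MetricSpace M] [CompactSpace M] (S : PHSystem M) :
    ∃ δ : ℝ, 0 < δ ∧ ∀ I : S.Arc,
      (∃ C : ℝ, ∀ n : ℕ, S.len (S.iter (n : ℤ) I) ≤ C) →
      Xor' (Filter.Tendsto (fun n : ℕ => S.len (S.iter (n : ℤ) I)) Filter.atTop (nhds 0))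
        (∃ n₀ : ℕ, ∀ n : ℕ, n₀ ≤ n → δ ≤ S.len (S.iter (n : ℤ) I)) := by
  classical
  obtain ⟨W, hW1, hCROSS⟩ := exists_cross S
  obtain ⟨cW, hcW0, hcW⟩ := exists_mod_upto S W
  obtain ⟨δ₀, hδ₀, hLOW⟩ := exists_low_upto S W
  refine ⟨min (min δ₀ cW) S.expConst, lt_min (lt_min hδ₀ hcW0) S.expConst_pos, ?_⟩
  intro I hI
  obtain ⟨C, hC⟩ := hI
  have hδpos : 0 < min (min δ₀ cW) S.expConst := lt_min (lt_min hδ₀ hcW0) S.expConst_pos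
  have hincomp : ∀ (_ : Tendsto (fun n : ℕ => S.len (S.iter (n : ℤ) I)) atTop (nhds 0))
      (n₀ : ℕ), (∀ n : ℕ, n₀ ≤ n → min (min δ₀ cW) S.expConst ≤ S.len (S.iter (n : ℤ) I)) →
      False := by
    intro h1 n₀ h2
    obtain ⟨N, hN⟩ := Metric.tendsto_atTop.mp h1 _ hδpos
    have hd := hN (max N n₀) (le_max_left _ _)
    have hg := h2 (max N n₀) (le_max_right _ _)
    rw [Real.dist_eq, sub_zero, abs_of_pos (S.len_pos _)] at hd
    linarith
  by_cases hev : ∃ m : ℕ, ∀ n : ℕ, m ≤ n → S.len (S.iter (n : ℤ) I) ≤ S.expConst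
  · obtain ⟨m, hm⟩ := hev
    refine Or.inl ⟨tendsto_of_evbdd S I C hC m hm, ?_⟩
    rintro ⟨n₀, hn₀⟩
    exact hincomp (tendsto_of_evbdd S I C hC m hm) n₀ hn₀
  · push_neg at hev
    have hio : ∀ m : ℕ, ∃ n : ℕ, m ≤ n ∧ S.expConst < S.len (S.iter (n : ℤ) I) := hev
    have h2 : ∃ n₀ : ℕ, ∀ n : ℕ, n₀ ≤ n →
        min (min δ₀ cW) S.expConst ≤ S.len (S.iter (n : ℤ) I) := by
      by_cases hsep : ∃ b : ℤ, S.expConst < S.len (S.iter b I) ∧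
          ∀ s : ℤ, 1 ≤ s → s ≤ (W : ℤ) → S.len (S.iter (b - s) I) ≤ S.expConst
      · obtain ⟨b, hb, hbs⟩ := hsep
        have hall := case_sep S I W δ₀ hLOW hCROSS b hb hbs
        refine ⟨b.toNat, fun n hn => ?_⟩
        have hbn : b ≤ (n : ℤ) := by
          have h5 := Int.self_le_toNat b
          have h6 : (b.toNat : ℤ) ≤ (n : ℤ) := by exact_mod_cast hn
          omega
        exact le_trans (le_trans (min_le_left _ _) (min_le_left _ _)) (hall n hbn)
      · push_neg at hsep
        have hall := case_dense S I W cW hcW hio hsep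
        refine ⟨0, fun n _ => ?_⟩
        refine le_trans ?_ (hall n)
        exact min_le_min (min_le_right _ _) le_rfl
    refine Or.inr ⟨h2, fun h1 => ?_⟩
    obtain ⟨n₀, hn₀⟩ := h2
    exact hincomp h1 n₀ hn₀
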